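/- In the ring of formal power series over ℚ in two variables t_a, t_d, one has (1 − t_a)^5 · (1 − t_d)^5 · ∑_{n,k ≥ 0} ((n+1)²(k+1)(n+k+2)(k+2)(n+k+3)/12) · t_d^n t_a^k = 1 + 3 t_d + t_a·(1 − 5 t_d − 5 t_d² + t_d³) + t_a²·(3 t_d² + t_d³). That is, the two-variable generating function of the dimensions of the su(4)×su(2) representations [n,k,0; n] equals the claimed closed form of the main branch of the FM_2 Hilbert series. -/

import Mathlib

/-- The two-variable generating function whose coefficient of `t_a^k t_d^n`
(`t_a` = variable `0`, `t_d` = variable `1`) is the dimension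
`(n+1)²(k+1)(n+k+2)(k+2)(n+k+3)/12` of the `su(4)×su(2)` representation `[n,k,0; n]`. -/
noncomputable def fm2Refined : MvPowerSeries (Fin 2) ℚ :=
  fun e => ((e 1 : ℚ) + 1) ^ 2 * ((e 0 : ℚ) + 1) * ((e 1 : ℚ) + (e 0 : ℚ) + 2) *
    ((e 0 : ℚ) + 2) * ((e 1 : ℚ) + (e 0 : ℚ) + 3) / 12

open MvPowerSeries Finset Finsupp in
private lemma fm2_mono (i j : ℕ) (c : ℚ) :
    MvPowerSeries.monomial (single (0:Fin 2) i + single 1 j) c =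
      MvPowerSeries.C (σ := Fin 2) (R := ℚ) c * MvPowerSeries.X 0 ^ i * MvPowerSeries.X 1 ^ j := by
  rw [X_pow_eq, X_pow_eq]
  rw [show (MvPowerSeries.C (σ := Fin 2) (R := ℚ) c) = MvPowerSeries.monomial 0 c from rfl]
  rw [monomial_mul_monomial, monomial_mul_monomial]
  simp

open MvPowerSeries Finset Finsupp in
private lemma fm2_pref_eq :
    ((1 - MvPowerSeries.X 0) ^ 5 * (1 - MvPowerSeries.X 1) ^ 5 : MvPowerSeries (Fin 2) ℚ) =
      ∑ i ∈ range 6, ∑ j ∈ range 6,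
        MvPowerSeries.monomial (single 0 i + single 1 j)
          ((-1 : ℚ) ^ (i + j) * (Nat.choose 5 i) * (Nat.choose 5 j)) := by
  simp only [sum_range_succ, sum_range_zero, fm2_mono]
  norm_num [Nat.choose]
  simp only [map_ofNat]
  ring

open MvPowerSeries Finset Finsupp in
private lemma fm2_rhs_eq :
    (1 + 3 * MvPowerSeries.X 1 +
        MvPowerSeries.X 0 *
          (1 - 5 * MvPowerSeries.X 1 - 5 * MvPowerSeries.X 1 ^ 2 + MvPowerSeries.X 1 ^ 3) +
        MvPowerSeries.X 0 ^ 2 *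
          (3 * MvPowerSeries.X 1 ^ 2 + MvPowerSeries.X 1 ^ 3) : MvPowerSeries (Fin 2) ℚ) =
      MvPowerSeries.monomial (single 0 0 + single 1 0) 1 +
      MvPowerSeries.monomial (single 0 0 + single 1 1) 3 +
      MvPowerSeries.monomial (single 0 1 + single 1 0) 1 +
      MvPowerSeries.monomial (single 0 1 + single 1 1) (-5) +
      MvPowerSeries.monomial (single 0 1 + single 1 2) (-5) +
      MvPowerSeries.monomial (single 0 1 + single 1 3) 1 +
      MvPowerSeries.monomial (single 0 2 + single 1 2) 3 +
      MvPowerSeries.monomial (single 0 2 + single 1 3) 1 := by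
  simp only [fm2_mono, map_one, map_neg, map_ofNat]
  ring

open Finsupp in
private lemma fm2_le_e (i j : ℕ) (e : Fin 2 →₀ ℕ) :
    (single (0:Fin 2) i + single 1 j) ≤ e ↔ i ≤ e 0 ∧ j ≤ e 1 := by
  rw [Finsupp.le_def]
  constructor
  · intro h
    exact ⟨by simpa using h 0, by simpa using h 1⟩
  · rintro ⟨h0, h1⟩ s
    fin_cases s <;> simp [Finsupp.single_apply] <;> assumption

open Finsupp in
private lemma fm2_e_eq (i j : ℕ) (e : Fin 2 →₀ ℕ) :
    (e = single (0:Fin 2) i + single 1 j) ↔ e 0 = i ∧ e 1 = j := by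
  constructor
  · rintro rfl; simp
  · rintro ⟨h0, h1⟩
    ext s
    fin_cases s <;> simp [Finsupp.single_apply] <;> omega

open Finsupp in
private lemma fm2_sub_e0 (i j : ℕ) (e : Fin 2 →₀ ℕ) :
    (e - (single (0:Fin 2) i + single 1 j) : Fin 2 →₀ ℕ) 0 = e 0 - i := by
  simp [Finsupp.tsub_apply]

open Finsupp in
private lemma fm2_sub_e1 (i j : ℕ) (e : Fin 2 →₀ ℕ) :
    (e - (single (0:Fin 2) i + single 1 j) : Fin 2 →₀ ℕ) 1 = e 1 - j := by
  simp [Finsupp.tsub_apply]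

/-- The dimension function, as a function of `k = e 0` and `n = e 1`. -/
private def fm2dd (k n : ℕ) : ℚ :=
  ((n:ℚ)+1)^2*((k:ℚ)+1)*((n:ℚ)+(k:ℚ)+2)*((k:ℚ)+2)*((n:ℚ)+(k:ℚ)+3)/12

private lemma fm2_coeff (m : Fin 2 →₀ ℕ) :
    MvPowerSeries.coeff m fm2Refined = fm2dd (m 0) (m 1) := rfl

open Finset in
private lemma fm2_trunc (f : ℕ → ℚ) (k : ℕ) :
    (∑ i ∈ range 6, if i ≤ k then f i else 0) = ∑ i ∈ range (min 6 (k+1)), f i := by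
  rw [← Finset.sum_filter]
  congr 1
  ext x
  simp [Nat.lt_succ_iff, Nat.lt_min]

open Finset in
private lemma fm2_double (f : ℕ → ℕ → ℚ) (k n : ℕ) :
    (∑ i ∈ range 6, ∑ j ∈ range 6, if i ≤ k ∧ j ≤ n then f i j else 0)
      = ∑ i ∈ range (min 6 (k+1)), ∑ j ∈ range (min 6 (n+1)), f i j := by
  calc (∑ i ∈ range 6, ∑ j ∈ range 6, if i ≤ k ∧ j ≤ n then f i j else 0)
      = ∑ i ∈ range 6, if i ≤ k then (∑ j ∈ range 6, if j ≤ n then f i j else 0) else 0 := by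
        refine Finset.sum_congr rfl fun i _ => ?_
        by_cases h : i ≤ k <;> simp [h]
    _ = ∑ i ∈ range (min 6 (k+1)), ∑ j ∈ range 6, if j ≤ n then f i j else 0 :=
        fm2_trunc _ k
    _ = ∑ i ∈ range (min 6 (k+1)), ∑ j ∈ range (min 6 (n+1)), f i j :=
        Finset.sum_congr rfl fun i _ => fm2_trunc _ n

open Finset in
set_option maxHeartbeats 4000000 in
private lemma fm2_key (k n : ℕ) :
    (∑ i ∈ range (min 6 (k+1)), ∑ j ∈ range (min 6 (n+1)),
        (-1:ℚ)^(i+j) * (Nat.choose 5 i) * (Nat.choose 5 j) * fm2dd (k-i) (n-j)) =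
    (((((((if k = 0 ∧ n = 0 then 1 else 0) + if k = 0 ∧ n = 1 then 3 else 0) +
        if k = 1 ∧ n = 0 then 1 else 0) + if k = 1 ∧ n = 1 then -5 else 0) +
        if k = 1 ∧ n = 2 then -5 else 0) + if k = 1 ∧ n = 3 then 1 else 0) +
        if k = 2 ∧ n = 2 then 3 else 0) + if k = 2 ∧ n = 3 then 1 else 0 := by
  rcases Nat.lt_or_ge k 5 with hk | hk
  · rcases Nat.lt_or_ge n 5 with hn | hn
    · interval_cases k <;> interval_cases n <;>
        norm_num [Finset.sum_range_succ, fm2dd, Nat.choose]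
    · obtain ⟨b, rfl⟩ : ∃ b, n = b + 5 := ⟨n - 5, by omega⟩
      have h6 : min 6 (b + 5 + 1) = 6 := by omega
      have u1 : b + 5 - 1 = b + 4 := by omega
      have u2 : b + 5 - 2 = b + 3 := by omega
      have u3 : b + 5 - 3 = b + 2 := by omega
      have u4 : b + 5 - 4 = b + 1 := by omega
      have u5 : b + 5 - 5 = b := by omega
      have hb0 : b + 5 ≠ 0 := by omega
      have hb1 : b + 5 ≠ 1 := by omega
      have hb2 : b + 5 ≠ 2 := by omega
      have hb3 : b + 5 ≠ 3 := by omega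
      interval_cases k <;>
        · simp only [h6]
          norm_num [Finset.sum_range_succ, Nat.choose, u1, u2, u3, u4, u5, hb0, hb1, hb2, hb3]
          simp only [fm2dd]
          push_cast
          ring
  · obtain ⟨a, rfl⟩ : ∃ a, k = a + 5 := ⟨k - 5, by omega⟩
    have h6 : min 6 (a + 5 + 1) = 6 := by omega
    have s1 : a + 5 - 1 = a + 4 := by omega
    have s2 : a + 5 - 2 = a + 3 := by omega
    have s3 : a + 5 - 3 = a + 2 := by omega
    have s4 : a + 5 - 4 = a + 1 := by omega
    have s5 : a + 5 - 5 = a := by omega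
    have ha0 : a + 5 ≠ 0 := by omega
    have ha1 : a + 5 ≠ 1 := by omega
    have ha2 : a + 5 ≠ 2 := by omega
    rcases Nat.lt_or_ge n 5 with hn | hn
    · interval_cases n <;>
        · simp only [h6]
          norm_num [Finset.sum_range_succ, Nat.choose, s1, s2, s3, s4, s5, ha0, ha1, ha2]
          simp only [fm2dd]
          push_cast
          ring
    · obtain ⟨b, rfl⟩ : ∃ b, n = b + 5 := ⟨n - 5, by omega⟩
      have h6' : min 6 (b + 5 + 1) = 6 := by omega
      have u1 : b + 5 - 1 = b + 4 := by omega
      have u2 : b + 5 - 2 = b + 3 := by omega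
      have u3 : b + 5 - 3 = b + 2 := by omega
      have u4 : b + 5 - 4 = b + 1 := by omega
      have u5 : b + 5 - 5 = b := by omega
      have hb0 : b + 5 ≠ 0 := by omega
      have hb1 : b + 5 ≠ 1 := by omega
      have hb2 : b + 5 ≠ 2 := by omega
      have hb3 : b + 5 ≠ 3 := by omega
      simp only [h6, h6']
      simp only [Finset.sum_range_succ, Finset.sum_range_zero]
      simp only [s1, s2, s3, s4, s5, u1, u2, u3, u4, u5, Nat.sub_zero]
      norm_num [Nat.choose, fm2dd, ha0, ha1, ha2, hb0]
      ring

open MvPowerSeries Finset Finsupp in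
/-- The refined Hilbert series of the main branch of the `FM_2` moduli space:
`(1 − t_a)^5 (1 − t_d)^5 · ∑_{n,k} dim[n,k,0;n] t_d^n t_a^k
  = 1 + 3 t_d + t_a (1 − 5 t_d − 5 t_d² + t_d³) + t_a² (3 t_d² + t_d³)`. -/
theorem fm2_refined_hilbert_series :
    (1 - (MvPowerSeries.X 0 : MvPowerSeries (Fin 2) ℚ)) ^ 5 *
        (1 - (MvPowerSeries.X 1 : MvPowerSeries (Fin 2) ℚ)) ^ 5 * fm2Refined =
      1 + 3 * MvPowerSeries.X 1 +
        MvPowerSeries.X 0 *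
          (1 - 5 * MvPowerSeries.X 1 - 5 * MvPowerSeries.X 1 ^ 2 + MvPowerSeries.X 1 ^ 3) +
        MvPowerSeries.X 0 ^ 2 *
          (3 * MvPowerSeries.X 1 ^ 2 + MvPowerSeries.X 1 ^ 3) := by
  rw [fm2_pref_eq, fm2_rhs_eq]
  ext e
  simp only [Finset.sum_mul, map_sum, map_add, coeff_monomial_mul, coeff_monomial,
    fm2_le_e, fm2_e_eq, fm2_coeff, fm2_sub_e0, fm2_sub_e1]
  rw [fm2_double (fun i j => (-1:ℚ)^(i+j) * (Nat.choose 5 i) * (Nat.choose 5 j) *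
    fm2dd (e 0 - i) (e 1 - j))]
  exact fm2_key (e 0) (e 1)
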